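/- arXiv:1609.05479 — 6 statements merged into one kernel-verified Lean document; each statement's English description precedes it below -/
import Mathlib

section
/- Let H be a separable Hilbert space and G : H → ℝ twice continuously differentiable with ∇G(m) = 0. Suppose there exist ε > 0 and λmin > 0 such that for all h in the ball B(m, ε), the Hessian Γ_h of G at h satisfies ⟨Γ_h u, u⟩ ≥ (λmin/2)‖u‖² for all u ∈ H. Then for every A > 0 and every h ∈ B(m, A), ⟨∇G(h), h − m⟩ ≥ c_A ‖h − m‖², where c_A := min{λmin/2, λmin·ε/(2A)}. -/
/-!
Along the segment `t ↦ m + t • (h - m)` the slope `φ t = ⟪∇G (m + t • (h - m)), h - m⟫`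
vanishes at `t = 0` (critical point) and is nondecreasing (convexity of `G`). While the segment
stays in `ball m ε` its derivative `⟪Γ (h - m), h - m⟫` is at least `lmin / 2 * ‖h - m‖ ^ 2`,
so `φ 1 ≥ φ t₀ ≥ lmin / 2 * ‖h - m‖ ^ 2 * t₀` with `t₀ = min 1 (ε / ‖h - m‖)`, and `t₀ ≥ ε / A`
when the minimum is not `1`.
-/

open Metric Set
open scoped RealInnerProductSpace

section

variable {H : Type*} [NormedAddCommGroup H] [InnerProductSpace ℝ H]

theorem hasDerivAt_add_smul (x v : H) (t : ℝ) : HasDerivAt (fun s : ℝ => x + s • v) v t := by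
  simpa using ((hasDerivAt_id t).smul_const v).const_add x

theorem HasFDerivAt.hasDerivAt_inner_add_smul {F : H → H} {L : H →L[ℝ] H} {x v : H} {t : ℝ}
    (hF : HasFDerivAt F L (x + t • v)) :
    HasDerivAt (fun s : ℝ => ⟪F (x + s • v), v⟫) ⟪L v, v⟫ t := by
  simpa using (hF.comp_hasDerivAt t (hasDerivAt_add_smul x v t)).inner ℝ (hasDerivAt_const t v)

variable [CompleteSpace H] {G : H → ℝ}

theorem DifferentiableAt.hasDerivAt_comp_add_smul {x v : H} {t : ℝ}
    (hG : DifferentiableAt ℝ G (x + t • v)) :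
    HasDerivAt (fun s : ℝ => G (x + s • v)) ⟪gradient G (x + t • v), v⟫ t := by
  simpa [Function.comp_def] using
    hG.hasGradientAt.hasFDerivAt.comp_hasDerivAt t (hasDerivAt_add_smul x v t)

theorem ConvexOn.monotone_inner_gradient_add_smul (hconv : ConvexOn ℝ univ G)
    (hdiff : Differentiable ℝ G) (x v : H) :
    Monotone fun t : ℝ => ⟪gradient G (x + t • v), v⟫ := by
  have hline : ConvexOn ℝ univ fun s : ℝ => G (x + s • v) := by
    simpa [Function.comp_def, AffineMap.lineMap_apply, add_comm] using
      hconv.comp_affineMap (AffineMap.lineMap x (x + v))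
  have hderiv (t : ℝ) := (hdiff (x + t • v)).hasDerivAt_comp_add_smul
  intro s t hst
  simpa only [(hderiv _).deriv] using
    hline.monotoneOn_deriv (fun t _ => (hderiv t).differentiableAt) trivial trivial hst

theorem mul_le_inner_gradient_add_smul {Γ : H → H →L[ℝ] H} {m v : H} {ε c t : ℝ}
    (hε : 0 < ε) (hm : gradient G m = 0) (hΓ : ∀ h, HasFDerivAt (gradient G) (Γ h) h)
    (hstrong : ∀ h ∈ ball m ε, ∀ u : H, c * ‖u‖ ^ 2 ≤ ⟪Γ h u, u⟫)
    (ht : 0 ≤ t) (htε : t * ‖v‖ ≤ ε) :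
    c * ‖v‖ ^ 2 * t ≤ ⟪gradient G (m + t • v), v⟫ := by
  have hderiv (s : ℝ) := (hΓ (m + s • v)).hasDerivAt_inner_add_smul
  have hslope : ∀ s ∈ interior (Icc 0 t),
      c * ‖v‖ ^ 2 ≤ deriv (fun s : ℝ => ⟪gradient G (m + s • v), v⟫) s := by
    intro s hs
    rw [interior_Icc] at hs
    rw [(hderiv s).deriv]
    refine hstrong _ ?_ v
    rw [mem_ball_iff_norm, add_sub_cancel_left, norm_smul, Real.norm_of_nonneg hs.1.le]
    nlinarith [hs.1, hs.2, norm_nonneg v]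
  have := (convex_Icc 0 t).mul_sub_le_image_sub_of_le_deriv
    (fun s _ => (hderiv s).continuousAt.continuousWithinAt)
    (fun s _ => (hderiv s).differentiableAt.differentiableWithinAt) hslope
    0 (left_mem_Icc.2 ht) t (right_mem_Icc.2 ht) ht
  simpa [hm] using this

end

theorem stmt_0_general
    {H : Type*} [NormedAddCommGroup H] [InnerProductSpace ℝ H] [CompleteSpace H]
    (G : H → ℝ) (hGconv : ConvexOn ℝ Set.univ G) (hGsmooth : ContDiff ℝ 2 G)
    (m : H) (hm : gradient G m = 0)
    (Γ : H → H →L[ℝ] H) (hΓ : ∀ h, HasFDerivAt (gradient G) (Γ h) h)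
    (ε lmin : ℝ) (hε : 0 < ε) (hlmin : 0 < lmin)
    (hstrong : ∀ h ∈ ball m ε, ∀ u : H, lmin / 2 * ‖u‖ ^ 2 ≤ ⟪Γ h u, u⟫) :
    ∀ A > 0, ∀ h ∈ ball m A,
      min (lmin / 2) (lmin * ε / (2 * A)) * ‖h - m‖ ^ 2 ≤ ⟪gradient G h, h - m⟫ := by
  intro A hA h hh
  set r := ‖h - m‖
  have hrA : r < A := mem_ball_iff_norm.mp hh
  have hmono :=
    hGconv.monotone_inner_gradient_add_smul (hGsmooth.differentiable two_ne_zero) m (h - m)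
  have hbound (t : ℝ) := mul_le_inner_gradient_add_smul (v := h - m) (t := t) hε hm hΓ hstrong
  have hend : ⟪gradient G (m + (1 : ℝ) • (h - m)), h - m⟫ = ⟪gradient G h, h - m⟫ := by simp
  rcases lt_or_ge r ε with hrε | hεr
  · calc min (lmin / 2) (lmin * ε / (2 * A)) * r ^ 2 ≤ lmin / 2 * r ^ 2 * 1 := by
          rw [mul_one]; gcongr; exact min_le_left _ _
      _ ≤ _ := hend ▸ hbound 1 zero_le_one (by rw [one_mul]; exact hrε.le)
  · have hr : 0 < r := hε.trans_le hεr
    calc min (lmin / 2) (lmin * ε / (2 * A)) * r ^ 2 ≤ lmin * ε / (2 * A) * r ^ 2 := by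
          gcongr; exact min_le_right _ _
      _ ≤ lmin / 2 * r ^ 2 * (ε / r) := by
          rw [div_mul_eq_mul_div, mul_div_assoc', div_le_div_iff₀ (by positivity) hr]
          nlinarith [mul_pos (mul_pos hlmin hε) (mul_pos hr hr)]
      _ ≤ ⟪gradient G (m + (ε / r) • (h - m)), h - m⟫ :=
          hbound _ (by positivity) (div_mul_cancel₀ _ hr.ne').le
      _ ≤ _ := hend ▸ hmono ((div_le_one hr).2 hεr)

/-- Local strong convexity of `G` near its critical point `m`
(Proposition `strongconv` of the paper). -/
theorem stmt_0
    {H : Type*} [NormedAddCommGroup H] [InnerProductSpace ℝ H] [CompleteSpace H]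
    [TopologicalSpace.SeparableSpace H]
    (G : H → ℝ) (hGconv : ConvexOn ℝ Set.univ G) (hGsmooth : ContDiff ℝ 2 G)
    (m : H) (hm : gradient G m = 0)
    (Γ : H → H →L[ℝ] H) (hΓ : ∀ h, HasFDerivAt (gradient G) (Γ h) h)
    (ε lmin : ℝ) (hε : 0 < ε) (hlmin : 0 < lmin)
    (hstrong : ∀ h ∈ ball m ε, ∀ u : H, lmin / 2 * ‖u‖ ^ 2 ≤ ⟪Γ h u, u⟫) :
    ∀ A > 0, ∀ h ∈ ball m A,
      min (lmin / 2) (lmin * ε / (2 * A)) * ‖h - m‖ ^ 2 ≤ ⟪gradient G h, h - m⟫ :=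
  stmt_0_general G hGconv hGsmooth m hm Γ hΓ ε lmin hε hlmin hstrong
end

section
/- Let (Ω, F, (F_n), P) be a filtered probability space and (Z_n) a sequence of H-valued random variables adapted to (F_n), H a separable Hilbert space. Suppose there exist constants C, L₁ > 0 and a nonnegative deterministic sequence (γ_n) with Σγ_n² < ∞ such that E[‖Z_{n+1} − m‖² | F_n] ≤ (1 + 2C²γ_n²)‖Z_n − m‖² − 2γ_n ⟨Φ(Z_n), Z_n − m⟩ + 2γ_n² L₁ almost surely, where ⟨Φ(Z_n), Z_n − m⟩ ≥ 0 a.s. Then ‖Z_n − m‖² converges almost surely to a finite random variable, Σ_n γ_n⟨Φ(Z_n), Z_n − m⟩ < ∞ almost surely, and sup_n E[‖Z_n − m‖²] < ∞. -/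
/-!
Write `α n = ∏_{k<n} (1 + a k)`; it increases to a finite limit because `∑ a k < ∞`.
The discounted process `V n / α n` has Doob predictable increments at most
`(c n - B n) / α (n + 1)`, so its martingale part is bounded below by `-∑ c k / α (k + 1)`
and converges almost surely. Pathwise, `V n / α n` is that martingale plus the partial sums of
the increments; nonnegativity of `V` bounds `∑ B k / α (k + 1)` from above, which gives
summability of `B` and convergence of `V`. Since `Φ` is arbitrary, `B` need not be measurable,
so it only ever enters through pathwise inequalities. Taking expectations,
`E V (n + 1) ≤ (1 + a n) E V n + c n`, and the moment bound is discrete Grönwall.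
-/

open Metric Filter MeasureTheory
open scoped RealInnerProductSpace

open Finset Topology

section CompoundFactor

def compoundFactor (a : ℕ → ℝ) (n : ℕ) : ℝ := ∏ k ∈ range n, (1 + a k)

variable {a : ℕ → ℝ}

theorem compoundFactor_succ (n : ℕ) :
    compoundFactor a (n + 1) = compoundFactor a n * (1 + a n) :=
  prod_range_succ _ n

theorem one_le_compoundFactor (ha : ∀ n, 0 ≤ a n) (n : ℕ) : 1 ≤ compoundFactor a n :=
  one_le_prod fun k _ => le_add_of_nonneg_right (ha k)

theorem compoundFactor_pos (ha : ∀ n, 0 ≤ a n) (n : ℕ) : 0 < compoundFactor a n :=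
  one_pos.trans_le (one_le_compoundFactor ha n)

theorem monotone_compoundFactor (ha : ∀ n, 0 ≤ a n) : Monotone (compoundFactor a) :=
  monotone_nat_of_le_succ fun n => by
    rw [compoundFactor_succ]
    exact le_mul_of_one_le_right (compoundFactor_pos ha n).le (le_add_of_nonneg_right (ha n))

theorem compoundFactor_le_exp_tsum (ha : ∀ n, 0 ≤ a n) (haS : Summable a) (n : ℕ) :
    compoundFactor a n ≤ Real.exp (∑' k, a k) :=
  calc compoundFactor a n ≤ ∏ k ∈ range n, Real.exp (a k) :=
        prod_le_prod (fun k _ => by linarith [ha k]) fun k _ => by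
          linarith [Real.add_one_le_exp (a k)]
    _ = Real.exp (∑ k ∈ range n, a k) := (Real.exp_sum _ _).symm
    _ ≤ Real.exp (∑' k, a k) := Real.exp_le_exp.2 (haS.sum_le_tsum _ fun k _ => ha k)

theorem exists_tendsto_compoundFactor (ha : ∀ n, 0 ≤ a n) (haS : Summable a) :
    ∃ l, Tendsto (compoundFactor a) atTop (𝓝 l) :=
  ⟨_, tendsto_atTop_ciSup (monotone_compoundFactor ha)
    ⟨_, Set.forall_mem_range.2 (compoundFactor_le_exp_tsum ha haS)⟩⟩

theorem le_compoundFactor_mul_of_le_one_add_mul_add (ha : ∀ n, 0 ≤ a n) {x c : ℕ → ℝ}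
    (hc : ∀ n, 0 ≤ c n) (hx : ∀ n, x (n + 1) ≤ (1 + a n) * x n + c n) (n : ℕ) :
    x n ≤ compoundFactor a n * (x 0 + ∑ k ∈ range n, c k) := by
  induction n with
  | zero => simp [compoundFactor]
  | succ n ih =>
    calc x (n + 1) ≤ (1 + a n) * (compoundFactor a n * (x 0 + ∑ k ∈ range n, c k)) + c n :=
          (hx n).trans (by gcongr; linarith [ha n])
      _ ≤ compoundFactor a (n + 1) * (x 0 + ∑ k ∈ range (n + 1), c k) := by
        have h1 := one_le_compoundFactor ha (n + 1)
        rw [compoundFactor_succ] at h1 ⊢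
        rw [sum_range_succ]
        nlinarith [mul_le_mul_of_nonneg_right h1 (hc n)]

end CompoundFactor

theorem summable_sub_and_exists_tendsto_of_eq_add_sum {x m p t : ℕ → ℝ} (hx : ∀ n, 0 ≤ x n)
    {l : ℝ} (hm : Tendsto m atTop (𝓝 l)) (ht : Summable t) (hpt : ∀ n, p n ≤ t n)
    (hxmp : ∀ n, x n = m n + ∑ i ∈ range n, p i) :
    Summable (fun n => t n - p n) ∧ ∃ l, Tendsto x atTop (𝓝 l) := by
  have hmt := hm.add ht.hasSum.tendsto_sum_nat
  have hpartial : ∀ n, ∑ i ∈ range n, (t i - p i) = m n + ∑ i ∈ range n, t i - x n := by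
    intro n
    rw [sum_sub_distrib, hxmp]
    ring
  obtain ⟨M, hM⟩ := hmt.bddAbove_range
  have hsum : Summable (fun n => t n - p n) :=
    summable_of_sum_range_le (fun n => sub_nonneg.2 (hpt n)) fun n => by
      rw [hpartial]
      linarith [hx n, hM ⟨n, rfl⟩]
  refine ⟨hsum, _, (hmt.sub hsum.hasSum.tendsto_sum_nat).congr fun n => ?_⟩
  rw [hpartial]
  ring

theorem MeasureTheory.Supermartingale.exists_ae_tendsto_of_bddBelow {Ω : Type*}
    {m0 : MeasurableSpace Ω} {μ : Measure Ω} [IsFiniteMeasure μ] {ℱ : Filtration ℕ m0}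
    {f : ℕ → Ω → ℝ} (hf : Supermartingale f ℱ μ) {K : ℝ} (hK : ∀ n, ∀ᵐ ω ∂μ, K ≤ f n ω) :
    ∀ᵐ ω ∂μ, ∃ l, Tendsto (fun n => f n ω) atTop (𝓝 l) := by
  have hbdd : ∀ n, eLpNorm ((-f) n) 1 μ ≤
      ENNReal.ofReal (∫ ω, f 0 ω ∂μ + 2 * |K| * μ.real Set.univ) := by
    intro n
    rw [Pi.neg_apply, eLpNorm_one_eq_lintegral_enorm, ← ofReal_integral_norm_eq_lintegral_enorm
      (hf.integrable n).neg]
    refine ENNReal.ofReal_le_ofReal ?_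
    have habs : ∀ᵐ ω ∂μ, ‖-f n ω‖ ≤ f n ω + 2 * |K| := by
      filter_upwards [hK n] with ω hω
      rw [norm_neg, Real.norm_eq_abs]
      cases abs_cases (f n ω) <;> cases abs_cases K <;> linarith
    calc ∫ ω, ‖-f n ω‖ ∂μ ≤ ∫ ω, (f n ω + 2 * |K|) ∂μ :=
          integral_mono_ae (hf.integrable n).neg.norm ((hf.integrable n).add
            (integrable_const _)) habs
      _ ≤ ∫ ω, f 0 ω ∂μ + 2 * |K| * μ.real Set.univ := by
        rw [integral_add (hf.integrable n) (integrable_const _), integral_const, smul_eq_mul]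
        have := hf.setIntegral_le (Nat.zero_le n) MeasurableSet.univ
        simp only [setIntegral_univ] at this
        linarith
  filter_upwards [hf.neg.exists_ae_tendsto_of_bdd hbdd] with ω ⟨l, hl⟩
  exact ⟨-l, by simpa using hl.neg⟩

section Discounted

variable {Ω : Type*} {m0 : MeasurableSpace Ω} {μ : Measure Ω}
  {ℱ : Filtration ℕ m0} {V B : ℕ → Ω → ℝ} {a c : ℕ → ℝ}

noncomputable def discounted (a : ℕ → ℝ) (V : ℕ → Ω → ℝ) (n : ℕ) (ω : Ω) : ℝ :=
  V n ω / compoundFactor a n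

theorem stronglyAdapted_discounted (hV : StronglyAdapted ℱ V) :
    StronglyAdapted ℱ (discounted a V) :=
  fun n => by
    convert (hV n).mul_const (compoundFactor a n)⁻¹ using 1
    ext ω
    exact div_eq_mul_inv _ _

theorem integrable_discounted (hVint : ∀ n, Integrable (V n) μ) (n : ℕ) :
    Integrable (discounted a V n) μ :=
  (hVint n).div_const _

theorem condExp_discounted_succ_sub_ae_le [IsFiniteMeasure μ] (ha : ∀ n, 0 ≤ a n)
    (hV : StronglyAdapted ℱ V) (hVint : ∀ n, Integrable (V n) μ) {n : ℕ}
    (hrec : μ[V (n + 1) | ℱ n] ≤ᵐ[μ] fun ω => (1 + a n) * V n ω - B n ω + c n) :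
    μ[discounted a V (n + 1) - discounted a V n | ℱ n] ≤ᵐ[μ]
      fun ω => (c n - B n ω) / compoundFactor a (n + 1) := by
  have hsmul : discounted a V (n + 1) = (compoundFactor a (n + 1))⁻¹ • V (n + 1) := by
    ext ω; simp [discounted, div_eq_inv_mul]
  have hsplit := condExp_sub (m := ℱ n) (integrable_discounted (a := a) hVint (n + 1))
    (integrable_discounted (a := a) hVint n)
  rw [condExp_of_stronglyMeasurable (ℱ.le n) (stronglyAdapted_discounted hV n)
    (integrable_discounted hVint n), hsmul] at hsplit
  rw [hsmul]
  filter_upwards [hsplit, condExp_smul (m := ℱ n) (compoundFactor a (n + 1))⁻¹ (V (n + 1)),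
    hrec] with ω hω hsmulω hrecω
  rw [hω, Pi.sub_apply, hsmulω, Pi.smul_apply, smul_eq_mul, discounted, compoundFactor_succ]
  have hα := compoundFactor_pos ha n
  have h1a : 0 < 1 + a n := by linarith [ha n]
  rw [inv_mul_eq_div, ← mul_div_mul_right (V n ω) _ h1a.ne', mul_comm (V n ω), ← sub_div]
  exact div_le_div_of_nonneg_right (by linarith) (by positivity)

theorem apply_eq_martingalePart_add_sum (f : ℕ → Ω → ℝ) (n : ℕ) (ω : Ω) :
    f n ω = martingalePart f ℱ μ n ω + ∑ i ∈ range n, μ[f (i + 1) - f i | ℱ i] ω := by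
  simp [martingalePart, predictablePart, Finset.sum_apply]

namespace RobbinsSiegmund

theorem integral_le [IsProbabilityMeasure μ] (ha : ∀ n, 0 ≤ a n) (hc : ∀ n, 0 ≤ c n)
    (haS : Summable a) (hcS : Summable c) (hVpos : ∀ n, 0 ≤ᵐ[μ] V n)
    (hVint : ∀ n, Integrable (V n) μ) (hBpos : ∀ n, 0 ≤ᵐ[μ] B n)
    (hrec : ∀ n, μ[V (n + 1) | ℱ n] ≤ᵐ[μ] fun ω => (1 + a n) * V n ω - B n ω + c n) (n : ℕ) :
    ∫ ω, V n ω ∂μ ≤ Real.exp (∑' k, a k) * (∫ ω, V 0 ω ∂μ + ∑' k, c k) := by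
  have hstep : ∀ n, ∫ ω, V (n + 1) ω ∂μ ≤ (1 + a n) * ∫ ω, V n ω ∂μ + c n := fun n =>
    calc ∫ ω, V (n + 1) ω ∂μ = ∫ ω, (μ[V (n + 1) | ℱ n]) ω ∂μ :=
          (integral_condExp (ℱ.le n)).symm
      _ ≤ ∫ ω, ((1 + a n) * V n ω + c n) ∂μ := by
          refine integral_mono_ae integrable_condExp
            (((hVint n).const_mul _).add (integrable_const _)) ?_
          filter_upwards [hrec n, hBpos n] with ω hrecω (hBω : 0 ≤ B n ω)
          linarith
      _ = (1 + a n) * ∫ ω, V n ω ∂μ + c n := by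
          rw [integral_add ((hVint n).const_mul _) (integrable_const _), integral_const_mul]
          simp
  have hV0 : 0 ≤ ∫ ω, V 0 ω ∂μ := integral_nonneg_of_ae (hVpos 0)
  calc ∫ ω, V n ω ∂μ ≤ compoundFactor a n * (∫ ω, V 0 ω ∂μ + ∑ k ∈ range n, c k) :=
        le_compoundFactor_mul_of_le_one_add_mul_add (x := fun n => ∫ ω, V n ω ∂μ) ha hc hstep n
    _ ≤ Real.exp (∑' k, a k) * (∫ ω, V 0 ω ∂μ + ∑' k, c k) := by
        gcongr
        · exact add_nonneg hV0 (sum_nonneg fun k _ => hc k)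
        · exact compoundFactor_le_exp_tsum ha haS n
        · exact hcS.sum_le_tsum _ fun k _ => hc k

theorem ae_exists_tendsto_martingalePart [IsFiniteMeasure μ] (ha : ∀ n, 0 ≤ a n)
    (hc : ∀ n, 0 ≤ c n) (hcS : Summable c) (hV : StronglyAdapted ℱ V)
    (hVpos : ∀ n, 0 ≤ᵐ[μ] V n) (hVint : ∀ n, Integrable (V n) μ)
    (hinc : ∀ᵐ ω ∂μ, ∀ n, μ[discounted a V (n + 1) - discounted a V n | ℱ n] ω ≤ c n) :
    ∀ᵐ ω ∂μ, ∃ l, Tendsto (fun n => martingalePart (discounted a V) ℱ μ n ω) atTop (𝓝 l) := by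
  refine (martingale_martingalePart (stronglyAdapted_discounted hV)
    (integrable_discounted hVint)).supermartingale.exists_ae_tendsto_of_bddBelow
    (K := -∑' k, c k) fun n => ?_
  filter_upwards [ae_all_iff.2 hVpos, hinc] with ω hVω hincω
  have hsum : ∑ i ∈ range n, μ[discounted a V (i + 1) - discounted a V i | ℱ i] ω ≤ ∑' k, c k :=
    (sum_le_sum fun i _ => hincω i).trans (hcS.sum_le_tsum _ fun k _ => hc k)
  have hf : 0 ≤ discounted a V n ω := div_nonneg (hVω n) (compoundFactor_pos ha n).le
  linarith [apply_eq_martingalePart_add_sum (μ := μ) (ℱ := ℱ) (discounted a V) n ω]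

theorem ae_exists_tendsto_and_summable [IsFiniteMeasure μ] (ha : ∀ n, 0 ≤ a n)
    (hc : ∀ n, 0 ≤ c n) (haS : Summable a) (hcS : Summable c) (hV : StronglyAdapted ℱ V)
    (hVpos : ∀ n, 0 ≤ᵐ[μ] V n) (hVint : ∀ n, Integrable (V n) μ) (hBpos : ∀ n, 0 ≤ᵐ[μ] B n)
    (hrec : ∀ n, μ[V (n + 1) | ℱ n] ≤ᵐ[μ] fun ω => (1 + a n) * V n ω - B n ω + c n) :
    ∀ᵐ ω ∂μ, (∃ l, Tendsto (fun n => V n ω) atTop (𝓝 l)) ∧ Summable (fun n => B n ω) := by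
  set f := discounted a V
  set p : ℕ → Ω → ℝ := fun n => μ[f (n + 1) - f n | ℱ n]
  set t : ℕ → ℝ := fun n => c n / compoundFactor a (n + 1)
  have hα n : 0 < compoundFactor a n := compoundFactor_pos ha n
  have ht : Summable t := hcS.of_nonneg_of_le (fun n => div_nonneg (hc n) (hα _).le)
    fun n => div_le_self (hc n) (one_le_compoundFactor ha _)
  have hBt : ∀ᵐ ω ∂μ, ∀ n, 0 ≤ B n ω ∧ B n ω / compoundFactor a (n + 1) ≤ t n - p n ω := by
    filter_upwards [ae_all_iff.2 fun n => condExp_discounted_succ_sub_ae_le ha hV hVint (hrec n),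
      ae_all_iff.2 hBpos] with ω hpω hBω n
    have := hpω n
    rw [sub_div] at this
    exact ⟨hBω n, by linarith⟩
  have hpt : ∀ᵐ ω ∂μ, ∀ n, p n ω ≤ t n := by
    filter_upwards [hBt] with ω hω n
    linarith [div_nonneg (hω n).1 (hα (n + 1)).le, (hω n).2]
  have hpc : ∀ᵐ ω ∂μ, ∀ n, p n ω ≤ c n := by
    filter_upwards [hpt] with ω hω n
    exact (hω n).trans (div_le_self (hc n) (one_le_compoundFactor ha _))
  filter_upwards [ae_exists_tendsto_martingalePart ha hc hcS hV hVpos hVint hpc,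
    ae_all_iff.2 hVpos, hpt, hBt] with ω ⟨l, hl⟩ hVω hptω hBtω
  obtain ⟨hsum, lf, hlf⟩ := summable_sub_and_exists_tendsto_of_eq_add_sum
    (fun n => div_nonneg (hVω n) (hα n).le) hl ht hptω
    (apply_eq_martingalePart_add_sum f · ω)
  obtain ⟨lα, hlα⟩ := exists_tendsto_compoundFactor ha haS
  refine ⟨⟨lα * lf, (hlα.mul hlf).congr fun n => mul_div_cancel₀ _ (hα n).ne'⟩, ?_⟩
  refine (hsum.mul_left (Real.exp (∑' k, a k))).of_nonneg_of_le (fun n => (hBtω n).1)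
    fun n => ?_
  calc B n ω = compoundFactor a (n + 1) * (B n ω / compoundFactor a (n + 1)) :=
        (mul_div_cancel₀ _ (hα _).ne').symm
    _ ≤ Real.exp (∑' k, a k) * (t n - p n ω) :=
        mul_le_mul (compoundFactor_le_exp_tsum ha haS _) (hBtω n).2
          (div_nonneg (hBtω n).1 (hα _).le) (Real.exp_pos _).le

end RobbinsSiegmund

end Discounted

theorem stmt_4_general
    {H : Type*} [NormedAddCommGroup H] [InnerProductSpace ℝ H]
    {Ω : Type*} [m0 : MeasurableSpace Ω] (μ : MeasureTheory.Measure Ω)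
    [IsProbabilityMeasure μ] (ℱ : Filtration ℕ m0)
    (Z : ℕ → Ω → H) (hadapt : ∀ n, StronglyMeasurable[ℱ n] (Z n))
    (m : H) (Φ : H → H)
    (C L₁ : ℝ) (hL₁ : 0 < L₁)
    (γ : ℕ → ℝ) (hγpos : ∀ n, 0 ≤ γ n) (hγ2 : Summable (fun n => γ n ^ 2))
    (hpos : ∀ n, ∀ᵐ ω ∂μ, 0 ≤ ⟪Φ (Z n ω), Z n ω - m⟫)
    (hint : ∀ n, Integrable (fun ω => ‖Z n ω - m‖ ^ 2) μ)
    (hrec : ∀ n, μ[fun ω => ‖Z (n + 1) ω - m‖ ^ 2 | ℱ n] ≤ᵐ[μ]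
        fun ω => (1 + 2 * C ^ 2 * γ n ^ 2) * ‖Z n ω - m‖ ^ 2
          - 2 * γ n * ⟪Φ (Z n ω), Z n ω - m⟫ + 2 * γ n ^ 2 * L₁) :
    (∀ᵐ ω ∂μ, ∃ l : ℝ, Tendsto (fun n => ‖Z n ω - m‖ ^ 2) atTop (nhds l)) ∧
    (∀ᵐ ω ∂μ, Summable (fun n => γ n * ⟪Φ (Z n ω), Z n ω - m⟫)) ∧
    (∃ B : ℝ, ∀ n, ∫ ω, ‖Z n ω - m‖ ^ 2 ∂μ ≤ B) := by
  have ha n : 0 ≤ 2 * C ^ 2 * γ n ^ 2 := by positivity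
  have hc n : 0 ≤ 2 * γ n ^ 2 * L₁ := by positivity
  have haS : Summable fun n => 2 * C ^ 2 * γ n ^ 2 := hγ2.mul_left _
  have hcS : Summable fun n => 2 * γ n ^ 2 * L₁ := (hγ2.mul_left 2).mul_right L₁
  have hV : StronglyAdapted ℱ fun n ω => ‖Z n ω - m‖ ^ 2 := fun n =>
    (((hadapt n).sub stronglyMeasurable_const).norm).pow 2
  have hVpos n : 0 ≤ᵐ[μ] fun ω => ‖Z n ω - m‖ ^ 2 := ae_of_all _ fun ω => by positivity
  have hBpos n : 0 ≤ᵐ[μ] fun ω => 2 * γ n * ⟪Φ (Z n ω), Z n ω - m⟫ := by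
    filter_upwards [hpos n] with ω hω
    exact mul_nonneg (mul_nonneg zero_le_two (hγpos n)) hω
  have hae :=
    RobbinsSiegmund.ae_exists_tendsto_and_summable ha hc haS hcS hV hVpos hint hBpos hrec
  refine ⟨hae.mono fun ω h => h.1, hae.mono fun ω h => ?_,
    ⟨_, RobbinsSiegmund.integral_le ha hc haS hcS hVpos hint hBpos hrec⟩⟩
  simpa only [mul_assoc, inv_mul_cancel_left₀ (two_ne_zero (α := ℝ))] using h.2.mul_left 2⁻¹

/-- Robbins–Siegmund step in the consistency proof of the stochastic gradient algorithm:
a.s. convergence of `‖Z_n − m‖²`, a.s. summability of `γ_n⟨Φ(Z_n), Z_n − m⟩`, and a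
uniform bound on the second moments. -/
theorem stmt_4
    {H : Type*} [NormedAddCommGroup H] [InnerProductSpace ℝ H] [CompleteSpace H]
    [TopologicalSpace.SeparableSpace H]
    {Ω : Type*} [m0 : MeasurableSpace Ω] (μ : MeasureTheory.Measure Ω)
    [IsProbabilityMeasure μ] (ℱ : Filtration ℕ m0)
    (Z : ℕ → Ω → H) (hadapt : ∀ n, StronglyMeasurable[ℱ n] (Z n))
    (m : H) (Φ : H → H)
    (C L₁ : ℝ) (hC : 0 < C) (hL₁ : 0 < L₁)
    (γ : ℕ → ℝ) (hγpos : ∀ n, 0 ≤ γ n) (hγ2 : Summable (fun n => γ n ^ 2))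
    (hpos : ∀ n, ∀ᵐ ω ∂μ, 0 ≤ ⟪Φ (Z n ω), Z n ω - m⟫)
    (hint : ∀ n, Integrable (fun ω => ‖Z n ω - m‖ ^ 2) μ)
    (hrec : ∀ n, μ[fun ω => ‖Z (n + 1) ω - m‖ ^ 2 | ℱ n] ≤ᵐ[μ]
        fun ω => (1 + 2 * C ^ 2 * γ n ^ 2) * ‖Z n ω - m‖ ^ 2
          - 2 * γ n * ⟪Φ (Z n ω), Z n ω - m⟫ + 2 * γ n ^ 2 * L₁) :
    (∀ᵐ ω ∂μ, ∃ l : ℝ, Tendsto (fun n => ‖Z n ω - m‖ ^ 2) atTop (nhds l)) ∧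
    (∀ᵐ ω ∂μ, Summable (fun n => γ n * ⟪Φ (Z n ω), Z n ω - m⟫)) ∧
    (∃ B : ℝ, ∀ n, ∫ ω, ‖Z n ω - m‖ ^ 2 ∂μ ≤ B) :=
  stmt_4_general (m0 := m0) μ ℱ Z hadapt m Φ C L₁ hL₁ γ hγpos hγ2 hpos hint hrec
end

section
/- For geometric quantiles: let H be a separable Hilbert space, v ∈ H with ‖v‖ < 1, X an H-valued integrable random variable, and G_v(h) := E[‖X − h‖ − ‖X‖] − ⟨h, v⟩. Then G_v is convex and G_v(h) → +∞ as ‖h‖ → ∞; in particular G_v attains a minimum on H. -/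
/-!
The integrand `h ↦ ‖x - h‖ - ‖x‖` is convex and `1`-Lipschitz, and bounded below by
`‖h‖ - 2‖x‖`; with Cauchy–Schwarz this gives `G_v h ≥ (1 - ‖v‖)‖h‖ - 2 E‖X‖`. A minimizer
exists because a continuous convex function is weakly lower semicontinuous (its sublevel sets
are closed and convex, hence weakly closed), the coercive bound confines the search to a closed
ball, and closed balls of a Hilbert space are weakly compact (Banach–Alaoglu transported
through the Riesz isomorphism).
-/

open Metric Filter MeasureTheory
open scoped RealInnerProductSpace

section WeakTopology

variable {H : Type*} [NormedAddCommGroup H] [InnerProductSpace ℝ H] [CompleteSpace H]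

theorem continuous_toWeakSpace_toDual_symm :
    Continuous fun ℓ : WeakDual ℝ H =>
      toWeakSpace ℝ H ((InnerProductSpace.toDual ℝ H).symm (WeakDual.toStrongDual ℓ)) := by
  refine WeakBilin.continuous_of_continuous_eval _ fun f => ?_
  refine (WeakDual.eval_continuous ((InnerProductSpace.toDual ℝ H).symm f)).congr fun ℓ => ?_
  show WeakDual.toStrongDual ℓ _ =
    f ((InnerProductSpace.toDual ℝ H).symm (WeakDual.toStrongDual ℓ))
  rw [← InnerProductSpace.toDual_symm_apply, ← InnerProductSpace.toDual_symm_apply,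
    real_inner_comm]

theorem isCompact_toWeakSpace_closedBall (r : ℝ) :
    IsCompact (toWeakSpace ℝ H '' closedBall 0 r) := by
  convert (WeakDual.isCompact_closedBall (0 : StrongDual ℝ H) r).image
    continuous_toWeakSpace_toDual_symm using 1
  ext y
  simp only [Set.mem_image, mem_closedBall_zero_iff, Set.mem_preimage]
  constructor
  · rintro ⟨x, hx, rfl⟩
    exact ⟨WeakDual.toStrongDual.symm (InnerProductSpace.toDual ℝ H x), by simpa using hx,
      by simp⟩
  · rintro ⟨ℓ, hℓ, rfl⟩
    exact ⟨_, by simpa using hℓ, rfl⟩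

end WeakTopology

theorem ConvexOn.lowerSemicontinuous_comp_toWeakSpace_symm {E : Type*} [NormedAddCommGroup E]
    [NormedSpace ℝ E] {f : E → ℝ} (hf : ConvexOn ℝ Set.univ f) (hf' : LowerSemicontinuous f) :
    LowerSemicontinuous (f ∘ (toWeakSpace ℝ E).symm) := by
  refine lowerSemicontinuous_iff_isClosed_preimage.2 fun c => ?_
  have hconv : Convex ℝ (f ⁻¹' Set.Iic c) :=
    (by simpa using hf.convex_le c : Convex ℝ {x | f x ≤ c})
  have hweak := hconv.toWeakSpace_closure ℝ
  rw [(hf'.isClosed_preimage c).closure_eq] at hweak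
  rw [Set.preimage_comp, ← LinearEquiv.image_eq_preimage_symm, hweak]
  exact isClosed_closure

theorem ConvexOn.exists_forall_le_of_tendsto_comap_norm {H : Type*} [NormedAddCommGroup H]
    [InnerProductSpace ℝ H] [CompleteSpace H] {f : H → ℝ} (hconv : ConvexOn ℝ Set.univ f)
    (hlsc : LowerSemicontinuous f) (hcoer : Tendsto f (comap norm atTop) atTop) :
    ∃ x, ∀ y, f x ≤ f y := by
  obtain ⟨R, -, hR⟩ := (atTop_basis.comap norm).eventually_iff.1 (hcoer.eventually_gt_atTop (f 0))
  have h0 : toWeakSpace ℝ H 0 ∈ toWeakSpace ℝ H '' closedBall 0 R := by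
    refine ⟨0, mem_closedBall_self ?_, rfl⟩
    by_contra! hneg
    exact lt_irrefl _ (hR (x := 0) (by simpa using hneg.le))
  obtain ⟨a, -, ha⟩ := (hconv.lowerSemicontinuous_comp_toWeakSpace_symm hlsc).lowerSemicontinuousOn
    _ |>.exists_isMinOn ⟨_, h0⟩ (isCompact_toWeakSpace_closedBall R)
  refine ⟨(toWeakSpace ℝ H).symm a, fun y => ?_⟩
  rcases le_or_gt ‖y‖ R with hy | hy
  · simpa using ha ⟨y, by simpa using hy, rfl⟩
  · simpa using (ha h0).trans (hR (Set.mem_Ici.2 hy.le)).le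

noncomputable def geometricQuantileObjective {Ω H : Type*} [MeasurableSpace Ω]
    [NormedAddCommGroup H] [InnerProductSpace ℝ H] (μ : Measure Ω) (X : Ω → H) (v h : H) : ℝ :=
  (∫ ω, (‖X ω - h‖ - ‖X ω‖) ∂μ) - ⟪h, v⟫

section GeometricQuantile

variable {Ω H : Type*} [MeasurableSpace Ω] [NormedAddCommGroup H] {μ : Measure Ω} {X : Ω → H}

theorem integrable_norm_sub_sub_norm [IsFiniteMeasure μ] (hX : Integrable X μ) (h : H) :
    Integrable (fun ω => ‖X ω - h‖ - ‖X ω‖) μ :=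
  (hX.sub (integrable_const h)).norm.sub hX.norm

theorem lipschitzWith_integral_norm_sub_sub_norm [IsProbabilityMeasure μ] (hX : Integrable X μ) :
    LipschitzWith 1 fun h : H => ∫ ω, (‖X ω - h‖ - ‖X ω‖) ∂μ := by
  refine LipschitzWith.of_dist_le_mul fun h h' => ?_
  rw [dist_eq_norm, ← integral_sub (integrable_norm_sub_sub_norm hX h)
    (integrable_norm_sub_sub_norm hX h'), NNReal.coe_one, one_mul, dist_eq_norm]
  refine (norm_integral_le_of_norm_le_const (C := ‖h - h'‖) (ae_of_all _ fun ω => ?_)).trans_eq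
    (by simp)
  calc ‖‖X ω - h‖ - ‖X ω‖ - (‖X ω - h'‖ - ‖X ω‖)‖ = |‖X ω - h‖ - ‖X ω - h'‖| := by
        rw [Real.norm_eq_abs, sub_sub_sub_cancel_right]
    _ ≤ ‖(X ω - h) - (X ω - h')‖ := abs_norm_sub_norm_le _ _
    _ = ‖h - h'‖ := by rw [sub_sub_sub_cancel_left, norm_sub_rev]

variable [InnerProductSpace ℝ H]

theorem convexOn_geometricQuantileObjective [IsFiniteMeasure μ] (hX : Integrable X μ) (v : H) :
    ConvexOn ℝ Set.univ (geometricQuantileObjective μ X v) := by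
  have hconv : ∀ ω, ConvexOn ℝ Set.univ fun h : H => ‖X ω - h‖ - ‖X ω‖ := fun ω =>
    ((convexOn_univ_dist (X ω)).add_const (-‖X ω‖)).congr fun h _ => by
      rw [Pi.add_apply, dist_eq_norm, norm_sub_rev, ← sub_eq_add_neg]
  exact (integral_convexOn_of_integrand_ae convex_univ (ae_of_all _ hconv)
    fun h _ => integrable_norm_sub_sub_norm hX h).sub
    ((innerₛₗ ℝ v).concaveOn convex_univ |>.congr fun h _ => real_inner_comm h v)

theorem continuous_geometricQuantileObjective [IsProbabilityMeasure μ] (hX : Integrable X μ)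
    (v : H) : Continuous (geometricQuantileObjective μ X v) :=
  (lipschitzWith_integral_norm_sub_sub_norm hX).continuous.sub
    (continuous_id.inner continuous_const)

theorem le_geometricQuantileObjective [IsProbabilityMeasure μ] (hX : Integrable X μ) (v h : H) :
    (1 - ‖v‖) * ‖h‖ - 2 * ∫ ω, ‖X ω‖ ∂μ ≤ geometricQuantileObjective μ X v h := by
  have hint : ‖h‖ - 2 * ∫ ω, ‖X ω‖ ∂μ ≤ ∫ ω, (‖X ω - h‖ - ‖X ω‖) ∂μ := by
    calc ‖h‖ - 2 * ∫ ω, ‖X ω‖ ∂μ = ∫ ω, (‖h‖ - 2 * ‖X ω‖) ∂μ := by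
          rw [integral_sub (integrable_const _) (hX.norm.const_mul 2), integral_const_mul]
          simp
      _ ≤ ∫ ω, (‖X ω - h‖ - ‖X ω‖) ∂μ := by
          refine integral_mono ((integrable_const _).sub (hX.norm.const_mul 2))
            (integrable_norm_sub_sub_norm hX h) fun ω => ?_
          have htri : ‖h‖ - ‖X ω‖ ≤ ‖X ω - h‖ := norm_sub_rev h (X ω) ▸ norm_sub_norm_le h (X ω)
          dsimp only
          linarith
  have hinner : ⟪h, v⟫ ≤ ‖v‖ * ‖h‖ := (real_inner_le_norm h v).trans_eq (mul_comm _ _)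
  rw [geometricQuantileObjective]
  linarith

theorem tendsto_geometricQuantileObjective [IsProbabilityMeasure μ] (hX : Integrable X μ)
    {v : H} (hv : ‖v‖ < 1) :
    Tendsto (geometricQuantileObjective μ X v) (comap norm atTop) atTop :=
  tendsto_atTop_mono (le_geometricQuantileObjective hX v) <|
    tendsto_atTop_add_const_right _ _ <| tendsto_comap.const_mul_atTop (sub_pos.2 hv)

end GeometricQuantile

theorem stmt_13_general
    {H : Type*} [NormedAddCommGroup H] [InnerProductSpace ℝ H] [CompleteSpace H]
    {Ω : Type*} [MeasurableSpace Ω] (μ : MeasureTheory.Measure Ω) [IsProbabilityMeasure μ]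
    (X : Ω → H) (hX : Integrable X μ)
    (v : H) (hv : ‖v‖ < 1)
    (Gv : H → ℝ)
    (hGv : ∀ h : H, Gv h = (∫ ω, (‖X ω - h‖ - ‖X ω‖) ∂μ) - ⟪h, v⟫) :
    ConvexOn ℝ Set.univ Gv ∧
    Tendsto Gv (Filter.comap (fun h : H => ‖h‖) atTop) atTop ∧
    ∃ mv : H, ∀ h : H, Gv mv ≤ Gv h := by
  obtain rfl : Gv = geometricQuantileObjective μ X v := funext hGv
  have hconv := convexOn_geometricQuantileObjective hX v
  have hcoer := tendsto_geometricQuantileObjective hX hv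
  exact ⟨hconv, hcoer, hconv.exists_forall_le_of_tendsto_comap_norm
    (continuous_geometricQuantileObjective hX v).lowerSemicontinuous hcoer⟩

/-- The geometric quantile objective `G_v(h) = E[‖X − h‖ − ‖X‖] − ⟨h, v⟩` (with `‖v‖ < 1`)
is convex and coercive, hence attains a minimum on `H`. -/
theorem stmt_13
    {H : Type*} [NormedAddCommGroup H] [InnerProductSpace ℝ H] [CompleteSpace H]
    [TopologicalSpace.SeparableSpace H]
    {Ω : Type*} [MeasurableSpace Ω] (μ : MeasureTheory.Measure Ω) [IsProbabilityMeasure μ]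
    (X : Ω → H) (hX : Integrable X μ)
    (v : H) (hv : ‖v‖ < 1)
    (Gv : H → ℝ)
    (hGv : ∀ h : H, Gv h = (∫ ω, (‖X ω - h‖ - ‖X ω‖) ∂μ) - ⟪h, v⟫) :
    ConvexOn ℝ Set.univ Gv ∧
    Tendsto Gv (Filter.comap (fun h : H => ‖h‖) atTop) atTop ∧
    ∃ mv : H, ∀ h : H, Gv mv ≤ Gv h :=
  stmt_13_general μ X hX v hv Gv hGv
end

section
/- Let H be a Hilbert space, m ∈ H, Φ : H → H with ⟨Φ(h), h − m⟩ ≥ c·min{1, ε/‖h−m‖}·‖h−m‖² for constants c, ε > 0 (local strong convexity lower bound), and ‖Φ(h)‖² ≤ 2C²‖h−m‖² + 2L₁. Let γ_n = c_γn^{−α}, α ∈ (1/2,1). Then there exist a constant c' > 0 and a rank n₀ such that for all n ≥ n₀ and all h with ‖h − m‖ ≤ c' n^{1−α}: ‖h − m − γ_nΦ(h)‖² ≤ (1 − 3/n)‖h − m‖² + 2L₁γ_n². -/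
open Filter
open scoped RealInnerProductSpace Topology

/-!
Expanding the square, `‖x - γ Φ‖² = ‖x‖² - 2γ⟪Φ, x⟫ + γ²‖Φ‖²` with `x = h - m`.
On the ball `‖x‖ ≤ c ε / κₙ`, where `κₙ = 2 / (n γₙ) ≤ c` for large `n`, the local strong
convexity bound gives `⟪Φ, x⟫ ≥ κₙ ‖x‖²`, so the middle term is at least `(4 / n) ‖x‖²`.
Since `n γₙ² → 0` (as `α > 1/2`), the quadratic term `2 C² γₙ² ‖x‖²` is eventually at most
`(1 / n) ‖x‖²`, which leaves the contraction factor `1 - 3 / n`. The radius `c ε / κₙ`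
is a constant multiple of `n ^ (1 - α)`.
-/

theorem norm_sub_smul_sq_le {E : Type*} [NormedAddCommGroup E] [InnerProductSpace ℝ E]
    {x v : E} {t κ A B : ℝ} (ht : 0 ≤ t) (hinner : κ * ‖x‖ ^ 2 ≤ ⟪v, x⟫)
    (hv : ‖v‖ ^ 2 ≤ A * ‖x‖ ^ 2 + B) :
    ‖x - t • v‖ ^ 2 ≤ (1 - 2 * t * κ + t ^ 2 * A) * ‖x‖ ^ 2 + t ^ 2 * B := by
  rw [norm_sub_sq_real, real_inner_smul_right, norm_smul, mul_pow, Real.norm_eq_abs, sq_abs,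
    real_inner_comm]
  nlinarith [mul_le_mul_of_nonneg_left hinner ht, mul_le_mul_of_nonneg_left hv (sq_nonneg t)]

theorem mul_sq_le_mul_min_one_div_mul_sq {c ε κ r : ℝ} (hr : 0 ≤ r) (hκc : κ ≤ c)
    (hκr : κ * r ≤ c * ε) : κ * r ^ 2 ≤ c * min 1 (ε / r) * r ^ 2 := by
  rcases min_choice 1 (ε / r) with hmin | hmin <;> rw [hmin]
  · simpa using mul_le_mul_of_nonneg_right hκc (sq_nonneg r)
  · have hcancel : c * (ε / r) * r ^ 2 = c * ε * r := by
      rcases eq_or_ne r 0 with rfl | hr0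
      · simp
      · field_simp
    rw [hcancel]
    nlinarith [mul_le_mul_of_nonneg_right hκr hr]

theorem norm_sub_smul_sq_le_one_sub_three_div {H : Type*} [NormedAddCommGroup H]
    [InnerProductSpace ℝ H] (m : H) (Φ : H → H) {c ε C L₁ : ℝ}
    (hlow : ∀ h : H, c * min 1 (ε / ‖h - m‖) * ‖h - m‖ ^ 2 ≤ ⟪Φ h, h - m⟫)
    (hΦ : ∀ h : H, ‖Φ h‖ ^ 2 ≤ 2 * C ^ 2 * ‖h - m‖ ^ 2 + 2 * L₁)
    {n γ : ℝ} (hn : 0 < n) (hγ : 0 < γ) (hκc : 2 / (n * γ) ≤ c)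
    (hquad : 2 * C ^ 2 * (n * γ ^ 2) ≤ 1) {h : H} (hh : 2 / (n * γ) * ‖h - m‖ ≤ c * ε) :
    ‖h - m - γ • Φ h‖ ^ 2 ≤ (1 - 3 / n) * ‖h - m‖ ^ 2 + 2 * L₁ * γ ^ 2 := by
  have hinner := (mul_sq_le_mul_min_one_div_mul_sq (norm_nonneg _) hκc hh).trans (hlow h)
  have hfactor : 1 - 2 * γ * (2 / (n * γ)) + γ ^ 2 * (2 * C ^ 2) ≤ 1 - 3 / n := by
    have hdrift : 2 * γ * (2 / (n * γ)) = 4 / n := by field_simp; ring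
    have hsmall : γ ^ 2 * (2 * C ^ 2) ≤ 1 / n := by
      rw [le_div_iff₀ hn]; linarith
    rw [hdrift]
    have hsplit : 4 / n = 3 / n + 1 / n := by ring
    linarith
  calc ‖h - m - γ • Φ h‖ ^ 2
      ≤ (1 - 2 * γ * (2 / (n * γ)) + γ ^ 2 * (2 * C ^ 2)) * ‖h - m‖ ^ 2 + γ ^ 2 * (2 * L₁) :=
        norm_sub_smul_sq_le hγ.le hinner (hΦ h)
    _ ≤ (1 - 3 / n) * ‖h - m‖ ^ 2 + 2 * L₁ * γ ^ 2 := by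
        nlinarith [mul_le_mul_of_nonneg_right hfactor (sq_nonneg ‖h - m‖)]

theorem mul_rpow_neg_eq_rpow_one_sub {x : ℝ} (hx : 0 < x) (α : ℝ) :
    x * x ^ (-α) = x ^ (1 - α) := by
  rw [sub_eq_neg_add, Real.rpow_add_one hx.ne', mul_comm]

theorem mul_rpow_neg_sq_eq_rpow {x : ℝ} (hx : 0 < x) (α : ℝ) :
    x * (x ^ (-α)) ^ 2 = x ^ (-(2 * α - 1)) := by
  rw [← Real.rpow_mul_natCast hx.le, show -(2 * α - 1) = -α * (2 : ℕ) + 1 by push_cast; ring,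
    Real.rpow_add_one hx.ne', mul_comm]

theorem tendsto_natCast_mul_const_mul_rpow_neg_atTop {a α : ℝ} (ha : 0 < a) (hα : α < 1) :
    Tendsto (fun n : ℕ => (n : ℝ) * (a * (n : ℝ) ^ (-α))) atTop atTop := by
  have hpow := (tendsto_rpow_atTop (sub_pos.2 hα)).comp tendsto_natCast_atTop_atTop
  refine (hpow.const_mul_atTop ha).congr' ?_
  filter_upwards [eventually_gt_atTop 0] with n hn
  simp only [Function.comp_apply]
  rw [← mul_rpow_neg_eq_rpow_one_sub (Nat.cast_pos.2 hn)]
  ring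

theorem tendsto_natCast_mul_sq_const_mul_rpow_neg_zero (a : ℝ) {α : ℝ} (hα : 1 / 2 < α) :
    Tendsto (fun n : ℕ => (n : ℝ) * (a * (n : ℝ) ^ (-α)) ^ 2) atTop (𝓝 0) := by
  have hpow := (tendsto_rpow_neg_atTop (by linarith : 0 < 2 * α - 1)).comp
    tendsto_natCast_atTop_atTop
  have := hpow.const_mul (a ^ 2)
  rw [mul_zero] at this
  refine this.congr' ?_
  filter_upwards [eventually_gt_atTop 0] with n hn
  simp only [Function.comp_apply]
  rw [← mul_rpow_neg_sq_eq_rpow (Nat.cast_pos.2 hn)]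
  ring

theorem stmt_17_general
    {H : Type*} [NormedAddCommGroup H] [InnerProductSpace ℝ H]
    (m : H) (Φ : H → H)
    (c ε : ℝ) (hc : 0 < c) (hε : 0 < ε)
    (hlow : ∀ h : H, c * min 1 (ε / ‖h - m‖) * ‖h - m‖ ^ 2 ≤ ⟪Φ h, h - m⟫)
    (C L₁ : ℝ)
    (hΦ : ∀ h : H, ‖Φ h‖ ^ 2 ≤ 2 * C ^ 2 * ‖h - m‖ ^ 2 + 2 * L₁)
    (cγ α : ℝ) (hcγ : 0 < cγ) (hα : α ∈ Set.Ioo (1 / 2 : ℝ) 1)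
    (γ : ℕ → ℝ) (hγ : ∀ n : ℕ, γ n = cγ * (n : ℝ) ^ (-α)) :
    ∃ c' > (0 : ℝ), ∃ n₀ : ℕ, ∀ n ≥ n₀, ∀ h : H, ‖h - m‖ ≤ c' * (n : ℝ) ^ (1 - α) →
      ‖h - m - γ n • Φ h‖ ^ 2 ≤ (1 - 3 / (n : ℝ)) * ‖h - m‖ ^ 2 + 2 * L₁ * γ n ^ 2 := by
  obtain rfl : γ = fun n : ℕ => cγ * (n : ℝ) ^ (-α) := funext hγ
  have hlarge := (tendsto_natCast_mul_const_mul_rpow_neg_atTop hcγ hα.2).eventually_ge_atTop (2 / c)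
  have hsmall := ((tendsto_natCast_mul_sq_const_mul_rpow_neg_zero cγ hα.1).const_mul
    (2 * C ^ 2)).eventually (ge_mem_nhds (by rw [mul_zero]; exact one_pos))
  obtain ⟨n₀, hn₀⟩ := eventually_atTop.1 (hlarge.and (hsmall.and (eventually_gt_atTop 0)))
  refine ⟨cγ * c * ε / 2, by positivity, n₀, fun n hn h hh => ?_⟩
  obtain ⟨hlarge, hsmall, hn0⟩ := hn₀ n hn
  have hn : (0 : ℝ) < n := Nat.cast_pos.2 hn0
  have hnγ : 0 < (n : ℝ) * (cγ * (n : ℝ) ^ (-α)) := by positivity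
  refine norm_sub_smul_sq_le_one_sub_three_div m Φ hlow hΦ hn (by positivity)
    ((div_le_iff₀ hnγ).2 (by rwa [div_le_iff₀ hc, mul_comm] at hlarge)) hsmall ?_
  rw [div_mul_eq_mul_div, div_le_iff₀ hnγ]
  calc 2 * ‖h - m‖ ≤ 2 * (cγ * c * ε / 2 * (n : ℝ) ^ (1 - α)) := by gcongr
    _ = c * ε * ((n : ℝ) * (cγ * (n : ℝ) ^ (-α))) := by
      rw [← mul_rpow_neg_eq_rpow_one_sub hn]; ring

/-- Deterministic contraction estimate on the truncated event: there exist `c' > 0` and a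
rank `n₀` such that for `n ≥ n₀` and `‖h − m‖ ≤ c' n^{1−α}`,
`‖h − m − γ_n Φ(h)‖² ≤ (1 − 3/n)‖h − m‖² + 2L₁γ_n²`. -/
theorem stmt_17
    {H : Type*} [NormedAddCommGroup H] [InnerProductSpace ℝ H] [CompleteSpace H]
    (m : H) (Φ : H → H)
    (c ε : ℝ) (hc : 0 < c) (hε : 0 < ε)
    (hlow : ∀ h : H, c * min 1 (ε / ‖h - m‖) * ‖h - m‖ ^ 2 ≤ ⟪Φ h, h - m⟫)
    (C L₁ : ℝ) (hC : 0 < C) (hL₁ : 0 < L₁)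
    (hΦ : ∀ h : H, ‖Φ h‖ ^ 2 ≤ 2 * C ^ 2 * ‖h - m‖ ^ 2 + 2 * L₁)
    (cγ α : ℝ) (hcγ : 0 < cγ) (hα : α ∈ Set.Ioo (1 / 2 : ℝ) 1)
    (γ : ℕ → ℝ) (hγ : ∀ n : ℕ, γ n = cγ * (n : ℝ) ^ (-α)) :
    ∃ c' > (0 : ℝ), ∃ n₀ : ℕ, ∀ n ≥ n₀, ∀ h : H, ‖h - m‖ ≤ c' * (n : ℝ) ^ (1 - α) →
      ‖h - m - γ n • Φ h‖ ^ 2 ≤ (1 - 3 / (n : ℝ)) * ‖h - m‖ ^ 2 + 2 * L₁ * γ n ^ 2 :=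
  stmt_17_general m Φ c ε hc hε hlow C L₁ hΦ cγ α hcγ hα γ hγ
end

section
/- Let H be a Hilbert space and (Δ_n) a sequence in H satisfying Δ_{n+1} = (I − γ_nΓ)Δ_n − γ_nδ_n, where Γ is a bounded self-adjoint operator with spectrum in [λmin, C₀], λmin > 0, γ_n = c_γn^{−α} with α ∈ (0,1), and (δ_n) is a bounded sequence in H with ‖δ_n‖ → 0. Then ‖Δ_n‖ → 0; more precisely limsup_n ‖Δ_n‖ ≤ limsup_n ‖δ_n‖/λmin, so ‖Δ_n‖ = O(sup_{k≥n/2}‖δ_k‖). -/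
/-!
The operator `1 - γ • Γ` is self-adjoint with spectrum in `[1 - γ C₀, 1 - γ λmin]`, so once `γ`
is small its norm, which equals its spectral radius, is at most `1 - γ λmin`. Taking norms in the
recursion gives `‖Δₙ₊₁‖ ≤ (1 - bₙ) ‖Δₙ‖ + bₙ eₙ` with `bₙ = γₙ λmin`, `eₙ = ‖δₙ‖ / λmin`.
Since `∑ bₙ = ∞` (as `α ≤ 1`) and `eₙ → 0`, this scalar inequality forces `‖Δₙ‖ → 0`: above any
level `ε > eₙ` the excess `‖Δₙ‖ - ε` is damped by `∏ (1 - bₖ) ≤ exp (-∑ bₖ) → 0`.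
-/

open Metric Filter Finset
open scoped Pointwise Topology

theorem IsSelfAdjoint.norm_le_of_spectrum_subset_closedBall {𝕜 E : Type*} [RCLike 𝕜]
    [NormedAddCommGroup E] [InnerProductSpace 𝕜 E] [CompleteSpace E] {T : E →L[𝕜] E}
    (hT : IsSelfAdjoint T) {r : ℝ} (hr : 0 ≤ r) (h : spectrum 𝕜 T ⊆ closedBall 0 r) :
    ‖T‖ ≤ r := by
  have hρ : spectralRadius 𝕜 T ≤ r.toNNReal :=
    iSup₂_le fun k hk => ENNReal.coe_le_coe.mpr <| by
      rw [← NNReal.coe_le_coe, coe_nnnorm, Real.coe_toNNReal _ hr]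
      exact mem_closedBall_zero_iff.mp (h hk)
  rwa [T.spectralRadius_eq_nnnorm hT, ENNReal.coe_le_coe, ← NNReal.coe_le_coe, coe_nnnorm,
    Real.coe_toNNReal _ hr] at hρ

section

variable {H : Type*} [NormedAddCommGroup H] [InnerProductSpace ℝ H] [CompleteSpace H]

theorem IsSelfAdjoint.norm_one_sub_smul_le {T : H →L[ℝ] H} (hT : IsSelfAdjoint T) {a b : ℝ}
    (h : spectrum ℝ T ⊆ Set.Icc a b) {g : ℝ} (hg : 0 < g) (hga : g * a ≤ 1)
    (hgab : g * (a + b) ≤ 2) : ‖1 - g • T‖ ≤ 1 - g * a := by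
  refine ((IsSelfAdjoint.one _).sub ((IsSelfAdjoint.all g).smul hT))
    |>.norm_le_of_spectrum_subset_closedBall (by linarith) ?_
  have hσ : spectrum ℝ (1 - g • T) = {1} - g • spectrum ℝ T := by
    rw [← map_one (algebraMap ℝ (H →L[ℝ] H)), ← spectrum.singleton_sub_eq]
    exact congrArg _ (spectrum.unit_smul_eq_smul T (Units.mk0 g hg.ne'))
  rw [hσ]
  rintro _ ⟨_, rfl, _, ⟨s, hs, rfl⟩, rfl⟩
  obtain ⟨has, hsb⟩ := h hs
  simp only [mem_closedBall_zero_iff, Real.norm_eq_abs, abs_le, smul_eq_mul]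
  constructor <;> nlinarith

end

theorem tendsto_zero_of_le_one_sub_mul {v b : ℕ → ℝ} (hv : ∀ n, 0 ≤ v n)
    (hrec : ∀ᶠ n in atTop, v (n + 1) ≤ (1 - b n) * v n)
    (hb : Tendsto (fun n => ∑ k ∈ range n, b k) atTop atTop) :
    Tendsto v atTop (𝓝 0) := by
  obtain ⟨N, hN⟩ := eventually_atTop.mp hrec
  set S : ℕ → ℝ := fun n => ∑ k ∈ range n, b k
  have hS : ∀ n ≥ N, v n * Real.exp (S n) ≤ v N * Real.exp (S N) := by
    intro n hn
    induction n, hn using Nat.le_induction with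
    | base => rfl
    | succ n hn ih =>
      calc v (n + 1) * Real.exp (S (n + 1))
          = v (n + 1) * Real.exp (b n) * Real.exp (S n) := by
            simp only [S, sum_range_succ, Real.exp_add]; ring
        _ ≤ (1 - b n) * v n * Real.exp (b n) * Real.exp (S n) := by gcongr; exact hN n hn
        _ ≤ Real.exp (-b n) * v n * Real.exp (b n) * Real.exp (S n) := by
            gcongr
            exacts [hv n, Real.one_sub_le_exp_neg _]
        _ = v n * Real.exp (S n) := by rw [Real.exp_neg]; field_simp
        _ ≤ v N * Real.exp (S N) := ih
  have hdecay : Tendsto (fun n => v N * Real.exp (S N) * Real.exp (-S n)) atTop (𝓝 0) := by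
    simpa using (Real.tendsto_exp_atBot.comp (tendsto_neg_atTop_atBot.comp hb)).const_mul
      (v N * Real.exp (S N))
  refine squeeze_zero' (Eventually.of_forall hv) ?_ hdecay
  filter_upwards [eventually_ge_atTop N] with n hn
  rw [Real.exp_neg, ← div_eq_mul_inv, le_div_iff₀ (Real.exp_pos _)]
  exact hS n hn

theorem tendsto_zero_of_le_one_sub_mul_add_mul {u b e : ℕ → ℝ} (hu : ∀ n, 0 ≤ u n)
    (hb : ∀ᶠ n in atTop, 0 ≤ b n ∧ b n ≤ 1)
    (hrec : ∀ᶠ n in atTop, u (n + 1) ≤ (1 - b n) * u n + b n * e n)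
    (hbsum : Tendsto (fun n => ∑ k ∈ range n, b k) atTop atTop)
    (he : Tendsto e atTop (𝓝 0)) :
    Tendsto u atTop (𝓝 0) := by
  refine tendsto_order.2 ⟨fun a ha => Eventually.of_forall fun n => ha.trans_le (hu n),
    fun ε hε => ?_⟩
  set v : ℕ → ℝ := fun n => max (u n - ε / 2) 0
  have hv : Tendsto v atTop (𝓝 0) := by
    refine tendsto_zero_of_le_one_sub_mul (fun n => le_max_right _ _) ?_ hbsum
    filter_upwards [hb, hrec, he.eventually_le_const (half_pos hε)] with n ⟨hb0, hb1⟩ hn hen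
    have hvn : u n - ε / 2 ≤ v n := le_max_left _ _
    refine max_le ?_ (mul_nonneg (by linarith) (le_max_right _ _))
    nlinarith
  filter_upwards [hv.eventually_lt_const (half_pos hε)] with n hn
  linarith [le_max_left (u n - ε / 2) 0]

theorem tendsto_sum_range_rpow_neg_atTop {α : ℝ} (hα : α ≤ 1) :
    Tendsto (fun n => ∑ k ∈ range n, (k : ℝ) ^ (-α)) atTop atTop := by
  refine (not_summable_iff_tendsto_nat_atTop_of_nonneg fun k => by positivity).mp ?_
  rw [Real.summable_nat_rpow]
  linarith

theorem tendsto_zero_of_linear_recursion {H : Type*} [NormedAddCommGroup H]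
    [InnerProductSpace ℝ H] [CompleteSpace H] {Γ : H →L[ℝ] H} (hΓ : IsSelfAdjoint Γ)
    {a b : ℝ} (ha : 0 < a) (hspec : spectrum ℝ Γ ⊆ Set.Icc a b) {γ : ℕ → ℝ}
    (hγpos : ∀ᶠ n in atTop, 0 < γ n) (hγ : Tendsto γ atTop (𝓝 0))
    (hγsum : Tendsto (fun n => ∑ k ∈ range n, γ k) atTop atTop) {Δ δ : ℕ → H}
    (hrec : ∀ n, Δ (n + 1) = Δ n - γ n • Γ (Δ n) - γ n • δ n)
    (hδ : Tendsto δ atTop (𝓝 0)) :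
    Tendsto Δ atTop (𝓝 0) := by
  rw [tendsto_zero_iff_norm_tendsto_zero] at hδ ⊢
  have hsmall : ∀ᶠ n in atTop, γ n * a ≤ 1 ∧ γ n * (a + b) ≤ 2 := by
    have hlim := fun c : ℝ => by simpa using hγ.mul_const c
    exact (hlim a |>.eventually_le_const one_pos).and
      (hlim (a + b) |>.eventually_le_const two_pos)
  refine tendsto_zero_of_le_one_sub_mul_add_mul (b := fun n => γ n * a)
    (e := fun n => ‖δ n‖ / a) (fun n => norm_nonneg _) ?_ ?_ ?_ (by simpa using hδ.div_const a)
  · filter_upwards [hγpos, hsmall] with n hpos hn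
    exact ⟨by positivity, hn.1⟩
  · filter_upwards [hγpos, hsmall] with n hpos ⟨hga, hgab⟩
    calc ‖Δ (n + 1)‖ = ‖(1 - γ n • Γ) (Δ n) - γ n • δ n‖ := by simp [hrec]
      _ ≤ ‖1 - γ n • Γ‖ * ‖Δ n‖ + γ n * ‖δ n‖ := by
          grw [norm_sub_le, ContinuousLinearMap.le_opNorm, norm_smul, Real.norm_of_nonneg hpos.le]
      _ ≤ (1 - γ n * a) * ‖Δ n‖ + γ n * a * (‖δ n‖ / a) := by
          rw [mul_assoc, mul_div_cancel₀ _ ha.ne']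
          grw [hΓ.norm_one_sub_smul_le hspec hpos hga hgab]
  · simpa [← sum_mul] using hγsum.atTop_mul_const ha

theorem stmt_18_general
    {H : Type*} [NormedAddCommGroup H] [InnerProductSpace ℝ H] [CompleteSpace H]
    (Γ : H →L[ℝ] H) (hsa : IsSelfAdjoint Γ)
    (lmin C₀ : ℝ) (hlmin : 0 < lmin)
    (hspec : spectrum ℝ Γ ⊆ Set.Icc lmin C₀)
    (cγ α : ℝ) (hcγ : 0 < cγ) (hα : α ∈ Set.Ioo (0 : ℝ) 1)
    (γ : ℕ → ℝ) (hγ : ∀ n : ℕ, γ n = cγ * (n : ℝ) ^ (-α))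
    (Δ δv : ℕ → H)
    (hrec : ∀ n, Δ (n + 1) = Δ n - γ n • Γ (Δ n) - γ n • δv n)
    (hδ0 : Tendsto (fun n => ‖δv n‖) atTop (nhds 0)) :
    Tendsto Δ atTop (nhds 0) ∧
    Filter.limsup (fun n => ‖Δ n‖) atTop ≤ Filter.limsup (fun n => ‖δv n‖) atTop / lmin := by
  obtain rfl : γ = fun n : ℕ => cγ * (n : ℝ) ^ (-α) := funext hγ
  have hγpos : ∀ᶠ n : ℕ in atTop, 0 < cγ * (n : ℝ) ^ (-α) := by
    filter_upwards [eventually_gt_atTop 0] with n hn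
    positivity
  have hγ0 : Tendsto (fun n : ℕ => cγ * (n : ℝ) ^ (-α)) atTop (𝓝 0) := by
    simpa using ((tendsto_rpow_neg_atTop hα.1).comp tendsto_natCast_atTop_atTop).const_mul cγ
  have hγsum : Tendsto (fun n => ∑ k ∈ range n, cγ * (k : ℝ) ^ (-α)) atTop atTop := by
    simpa [← mul_sum] using (tendsto_sum_range_rpow_neg_atTop hα.2.le).const_mul_atTop hcγ
  have hΔ := tendsto_zero_of_linear_recursion hsa hlmin hspec hγpos hγ0 hγsum hrec
    (tendsto_zero_iff_norm_tendsto_zero.mpr hδ0)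
  refine ⟨hΔ, ?_⟩
  rw [(tendsto_zero_iff_norm_tendsto_zero.mp hΔ).limsup_eq, hδ0.limsup_eq, zero_div]

/-- Stabilization lemma: if `Δ_{n+1} = (I − γ_nΓ)Δ_n − γ_nδ_n` with `Γ` self-adjoint with
spectrum in `[λmin, C₀]`, `λmin > 0`, `γ_n = c_γ n^{−α}`, and `‖δ_n‖ → 0` with `(δ_n)`
bounded, then `Δ_n → 0` and `limsup ‖Δ_n‖ ≤ limsup ‖δ_n‖ / λmin`. -/
theorem stmt_18
    {H : Type*} [NormedAddCommGroup H] [InnerProductSpace ℝ H] [CompleteSpace H]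
    (Γ : H →L[ℝ] H) (hsa : IsSelfAdjoint Γ)
    (lmin C₀ : ℝ) (hlmin : 0 < lmin)
    (hspec : spectrum ℝ Γ ⊆ Set.Icc lmin C₀)
    (cγ α : ℝ) (hcγ : 0 < cγ) (hα : α ∈ Set.Ioo (0 : ℝ) 1)
    (γ : ℕ → ℝ) (hγ : ∀ n : ℕ, γ n = cγ * (n : ℝ) ^ (-α))
    (Δ δv : ℕ → H)
    (hrec : ∀ n, Δ (n + 1) = Δ n - γ n • Γ (Δ n) - γ n • δv n)
    (hbdd : ∃ D : ℝ, ∀ n, ‖δv n‖ ≤ D)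
    (hδ0 : Tendsto (fun n => ‖δv n‖) atTop (nhds 0)) :
    Tendsto Δ atTop (nhds 0) ∧
    Filter.limsup (fun n => ‖Δ n‖) atTop ≤ Filter.limsup (fun n => ‖δv n‖) atTop / lmin :=
  stmt_18_general Γ hsa lmin C₀ hlmin hspec cγ α hcγ hα γ hγ Δ δv hrec hδ0
end

section
/- Robbins–Siegmund theorem: let (V_n), (a_n), (B_n), (c_n) be nonnegative adapted real-valued sequences on a filtered probability space with E[V_{n+1} | F_n] ≤ (1 + a_n)V_n − B_n + c_n almost surely for all n, and Σ a_n < ∞, Σ c_n < ∞ almost surely. Then (V_n) converges almost surely to a finite random variable and Σ_n B_n < ∞ almost surely. -/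
/-
Dividing by `∏_{k<n} (1 + a_k)` reduces the theorem to the case `a = 0`, where
`V_n + ∑_{k<n} (B_k - c_k)` is a supermartingale up to integrability. Stopping it when
`∑_{k≤n} c_k` first exceeds a level `M` gives a genuine supermartingale bounded below by `-M`,
which converges almost surely; on the event `∑ c_k ≤ M` the stopped process is never stopped.
-/

open Filter MeasureTheory Finset
open scoped Topology

section Deterministic

-- For monotone `s`, this is `x` stopped at the last index before `s` exceeds `M`.
noncomputable def stopAbove (x s : ℕ → ℝ) (M : ℝ) (n : ℕ) : ℝ :=
  x 0 + ∑ k ∈ range n, if s (k + 1) ≤ M then x (k + 1) - x k else 0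

variable {x s : ℕ → ℝ} {M : ℝ}

@[simp]
lemma stopAbove_zero : stopAbove x s M 0 = x 0 := by
  simp [stopAbove]

lemma stopAbove_succ (n : ℕ) :
    stopAbove x s M (n + 1) =
      stopAbove x s M n + if s (n + 1) ≤ M then x (n + 1) - x n else 0 := by
  rw [stopAbove, sum_range_succ, ← add_assoc, ← stopAbove]

lemma stopAbove_eq_of_le (hs : Monotone s) {n : ℕ} (h : s n ≤ M) : stopAbove x s M n = x n := by
  induction n with
  | zero => exact stopAbove_zero
  | succ n ih =>
    rw [stopAbove_succ, if_pos h, ih ((hs n.le_succ).trans h)]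
    ring

lemma exists_stopAbove_eq (hs : Monotone s) (h0 : s 0 ≤ M) (n : ℕ) :
    ∃ m, s m ≤ M ∧ stopAbove x s M n = x m := by
  induction n with
  | zero => exact ⟨0, h0, stopAbove_zero⟩
  | succ n ih =>
    by_cases h : s (n + 1) ≤ M
    · exact ⟨n + 1, h, stopAbove_eq_of_le hs h⟩
    · obtain ⟨m, hm, hxm⟩ := ih
      exact ⟨m, hm, by rw [stopAbove_succ, if_neg h, hxm, add_zero]⟩

lemma summable_and_exists_tendsto_of_tendsto_add_sum_sub {v b c : ℕ → ℝ} (hv : ∀ n, 0 ≤ v n)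
    (hb : ∀ n, 0 ≤ b n) (hc : Summable c) {l : ℝ}
    (h : Tendsto (fun n => v n + ∑ k ∈ range n, (b k - c k)) atTop (𝓝 l)) :
    (∃ l', Tendsto v atTop (𝓝 l')) ∧ Summable b := by
  have hc_tendsto := hc.hasSum.tendsto_sum_nat
  obtain ⟨C₁, hC₁⟩ := h.bddAbove_range
  obtain ⟨C₂, hC₂⟩ := hc_tendsto.bddAbove_range
  have hb_summable : Summable b := summable_of_sum_range_le (c := C₁ + C₂) hb fun n => by
    have h₁ := hC₁ ⟨n, rfl⟩
    have h₂ := hC₂ ⟨n, rfl⟩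
    simp only [sum_sub_distrib] at h₁ h₂ ⊢
    linarith [hv n]
  refine ⟨⟨l - ∑' k, b k + ∑' k, c k, ?_⟩, hb_summable⟩
  refine ((h.sub hb_summable.hasSum.tendsto_sum_nat).add hc_tendsto).congr fun n => ?_
  rw [sum_sub_distrib]
  ring

end Deterministic

namespace MeasureTheory

variable {Ω : Type*} {m0 : MeasurableSpace Ω} {μ : Measure Ω} {ℱ : Filtration ℕ m0}

theorem Supermartingale.exists_ae_tendsto_of_ae_ge [IsFiniteMeasure μ] {f : ℕ → Ω → ℝ}
    (hf : Supermartingale f ℱ μ) {K : ℝ} (hK : ∀ n, ∀ᵐ ω ∂μ, K ≤ f n ω) :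
    ∀ᵐ ω ∂μ, ∃ l, Tendsto (fun n => f n ω) atTop (𝓝 l) := by
  have hL1 : ∀ n, ∫ ω, |f n ω| ∂μ ≤ ∫ ω, f 0 ω ∂μ + 2 * |K| * μ.real Set.univ := fun n => calc
    ∫ ω, |f n ω| ∂μ ≤ ∫ ω, (f n ω + 2 * |K|) ∂μ := by
      refine integral_mono_ae (hf.integrable n).abs ((hf.integrable n).add (integrable_const _)) ?_
      filter_upwards [hK n] with ω hω
      exact abs_le.2 ⟨by linarith [neg_abs_le K], by linarith [abs_nonneg K]⟩
    _ = ∫ ω, f n ω ∂μ + 2 * |K| * μ.real Set.univ := by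
      rw [integral_add (hf.integrable n) (integrable_const _), integral_const, smul_eq_mul,
        mul_comm]
    _ ≤ ∫ ω, f 0 ω ∂μ + 2 * |K| * μ.real Set.univ := by
      have := hf.setIntegral_le (Nat.zero_le n) MeasurableSet.univ
      rw [setIntegral_univ, setIntegral_univ] at this
      linarith
  have hbdd : ∀ n, eLpNorm ((-f) n) 1 μ ≤
      (∫ ω, f 0 ω ∂μ + 2 * |K| * μ.real Set.univ).toNNReal := fun n => by
    rw [Pi.neg_apply, eLpNorm_neg, eLpNorm_one_eq_lintegral_enorm,
      ← ofReal_integral_norm_eq_lintegral_enorm (hf.integrable n)]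
    exact ENNReal.ofReal_le_ofReal (by simpa only [Real.norm_eq_abs] using hL1 n)
  filter_upwards [hf.neg.exists_ae_tendsto_of_bdd hbdd] with ω ⟨l, hl⟩
  exact ⟨-l, by simpa using hl.neg⟩

theorem condExp_mul_le_of_condExp_le {m : MeasurableSpace Ω} {w f g : Ω → ℝ}
    (hw : StronglyMeasurable[m] w) (hw0 : 0 ≤ w) (hwf : Integrable (w * f) μ)
    (hf : Integrable f μ) (h : μ[f | m] ≤ᵐ[μ] g) : μ[w * f | m] ≤ᵐ[μ] w * g :=
  (condExp_mul_of_stronglyMeasurable_left hw hwf hf).trans_le <|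
    h.mono fun ω hω => mul_le_mul_of_nonneg_left hω (hw0 ω)

end MeasureTheory

section Localization

variable {Ω : Type*} {m0 : MeasurableSpace Ω} {μ : Measure Ω} {ℱ : Filtration ℕ m0}
  {V B c : ℕ → Ω → ℝ} {M : ℝ}

noncomputable def localizedProcess (V B c : ℕ → Ω → ℝ) (M : ℝ) (n : ℕ) (ω : Ω) : ℝ :=
  stopAbove (fun k => V k ω + ∑ j ∈ range k, (B j ω - c j ω)) (fun k => ∑ j ∈ range k, c j ω) M n

lemma localizedProcess_succ (n : ℕ) :
    localizedProcess V B c M (n + 1) = localizedProcess V B c M n +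
      {ω | ∑ j ∈ range (n + 1), c j ω ≤ M}.indicator (V (n + 1)) -
      {ω | ∑ j ∈ range (n + 1), c j ω ≤ M}.indicator (V n - B n + c n) := by
  ext ω
  simp only [localizedProcess, stopAbove_succ, Pi.add_apply, Pi.sub_apply, Set.indicator_apply,
    Set.mem_ofPred_eq]
  split_ifs
  · rw [sum_range_succ]
    ring
  · ring

lemma monotone_sum_range_apply (hc0 : ∀ n ω, 0 ≤ c n ω) (ω : Ω) :
    Monotone fun n => ∑ j ∈ range n, c j ω :=
  (sum_mono_set_of_nonneg fun j => hc0 j ω).comp range_mono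

lemma neg_le_localizedProcess (hV0 : ∀ n ω, 0 ≤ V n ω) (hB0 : ∀ n ω, 0 ≤ B n ω)
    (hc0 : ∀ n ω, 0 ≤ c n ω) (hM : 0 ≤ M) (n : ℕ) (ω : Ω) :
    -M ≤ localizedProcess V B c M n ω := by
  obtain ⟨m, hm, heq⟩ := exists_stopAbove_eq
    (x := fun k => V k ω + ∑ j ∈ range k, (B j ω - c j ω)) (monotone_sum_range_apply hc0 ω)
    (by simpa using hM) n
  rw [localizedProcess, heq, sum_sub_distrib]
  linarith [hV0 m ω, sum_nonneg (s := range m) fun j _ => hB0 j ω]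

lemma localizedProcess_eq (hc0 : ∀ n ω, 0 ≤ c n ω) {ω : Ω}
    (hM : ∀ n, ∑ j ∈ range n, c j ω ≤ M) (n : ℕ) :
    localizedProcess V B c M n ω = V n ω + ∑ j ∈ range n, (B j ω - c j ω) :=
  stopAbove_eq_of_le (monotone_sum_range_apply hc0 ω) (hM n)

lemma measurableSet_sum_range_succ_le (hc : StronglyAdapted ℱ c) (n : ℕ) :
    MeasurableSet[ℱ n] {ω | ∑ j ∈ range (n + 1), c j ω ≤ M} :=
  measurableSet_le (Finset.measurable_sum _ fun _ hj =>
    (hc.stronglyMeasurable_le (Nat.lt_succ_iff.1 (mem_range.1 hj))).measurable) measurable_const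

lemma stronglyAdapted_localizedProcess (hV : StronglyAdapted ℱ V) (hB : StronglyAdapted ℱ B)
    (hc : StronglyAdapted ℱ c) : StronglyAdapted ℱ (localizedProcess V B c M) := by
  intro n
  have hmeas {f : ℕ → Ω → ℝ} (hf : StronglyAdapted ℱ f) {k : ℕ} (hk : k ≤ n) :
      Measurable[ℱ n] (f k) :=
    (hf.stronglyMeasurable_le hk).measurable
  have hX {k : ℕ} (hk : k ≤ n) :
      Measurable[ℱ n] fun ω => V k ω + ∑ j ∈ range k, (B j ω - c j ω) :=
    (hmeas hV hk).add <| Finset.measurable_sum _ fun j hj =>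
      have hjn : j ≤ n := by have := mem_range.1 hj; omega
      (hmeas hB hjn).sub (hmeas hc hjn)
  refine Measurable.stronglyMeasurable ?_
  refine (hX (Nat.zero_le n)).add <| Finset.measurable_sum _ fun k hk => ?_
  have hkn : k + 1 ≤ n := mem_range.1 hk
  exact Measurable.ite (ℱ.mono (by omega) _ (measurableSet_sum_range_succ_le hc k))
    ((hX hkn).sub (hX (by omega))) measurable_const

lemma integrable_indicator_sub_add [IsFiniteMeasure μ] (hV : StronglyAdapted ℱ V)
    (hB : StronglyAdapted ℱ B) (hc : StronglyAdapted ℱ c) (hVint : ∀ n, Integrable (V n) μ)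
    (hV0 : ∀ n ω, 0 ≤ V n ω) (hB0 : ∀ n ω, 0 ≤ B n ω) (hc0 : ∀ n ω, 0 ≤ c n ω)
    (hrec : ∀ n, μ[V (n + 1) | ℱ n] ≤ᵐ[μ] V n - B n + c n) (hM : 0 ≤ M) (n : ℕ) :
    Integrable ({ω | ∑ j ∈ range (n + 1), c j ω ≤ M}.indicator (V n - B n + c n)) μ := by
  have hR0 : 0 ≤ᵐ[μ] V n - B n + c n :=
    (condExp_nonneg (ae_of_all _ (hV0 (n + 1)))).trans (hrec n)
  refine ((hVint n).add (integrable_const M)).mono' ?_ ?_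
  · exact ((((hV n).sub (hB n)).add (hc n)).indicator (measurableSet_sum_range_succ_le hc n)
      |>.mono (ℱ.le n)).aestronglyMeasurable
  · filter_upwards [hR0] with ω hω
    simp only [Set.indicator_apply, Set.mem_ofPred_eq, Pi.add_apply, Pi.sub_apply,
      Real.norm_eq_abs] at hω ⊢
    split_ifs with hA
    · rw [sum_range_succ] at hA
      rw [abs_of_nonneg hω]
      linarith [hB0 n ω, sum_nonneg (s := range n) fun j _ => hc0 j ω]
    · simpa using add_nonneg (hV0 n ω) hM

theorem supermartingale_localizedProcess [IsFiniteMeasure μ] (hV : StronglyAdapted ℱ V)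
    (hB : StronglyAdapted ℱ B) (hc : StronglyAdapted ℱ c) (hVint : ∀ n, Integrable (V n) μ)
    (hV0 : ∀ n ω, 0 ≤ V n ω) (hB0 : ∀ n ω, 0 ≤ B n ω) (hc0 : ∀ n ω, 0 ≤ c n ω)
    (hrec : ∀ n, μ[V (n + 1) | ℱ n] ≤ᵐ[μ] V n - B n + c n) (hM : 0 ≤ M) :
    Supermartingale (localizedProcess V B c M) ℱ μ := by
  have hA := measurableSet_sum_range_succ_le (M := M) hc
  have hRint := integrable_indicator_sub_add hV hB hc hVint hV0 hB0 hc0 hrec hM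
  have hint (n : ℕ) : Integrable (localizedProcess V B c M n) μ := by
    induction n with
    | zero => exact (hVint 0).congr (ae_of_all _ fun ω => by simp [localizedProcess])
    | succ n ih =>
      rw [localizedProcess_succ]
      exact (ih.add ((hVint _).indicator (ℱ.le n _ (hA n)))).sub (hRint n)
  refine supermartingale_of_condExp_sub_nonneg_nat (stronglyAdapted_localizedProcess hV hB hc)
    hint fun n => ?_
  set A := {ω | ∑ j ∈ range (n + 1), c j ω ≤ M}
  have hdiff : localizedProcess V B c M n - localizedProcess V B c M (n + 1) =
      A.indicator (V n - B n + c n) - A.indicator (V (n + 1)) := by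
    rw [localizedProcess_succ]
    abel
  have hRmeas : StronglyMeasurable[ℱ n] (A.indicator (V n - B n + c n)) :=
    (((hV n).sub (hB n)).add (hc n)).indicator (hA n)
  rw [hdiff]
  filter_upwards [condExp_sub (hRint n) ((hVint _).indicator (ℱ.le n _ (hA n))) (ℱ n),
    condExp_indicator (hVint (n + 1)) (hA n), hrec n] with ω hsub hind hω
  rw [Pi.zero_apply, hsub, Pi.sub_apply, condExp_of_stronglyMeasurable (ℱ.le n) hRmeas (hRint n),
    hind]
  simp only [A, Set.indicator_apply, Set.mem_ofPred_eq, Pi.sub_apply, Pi.add_apply] at hω ⊢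
  split_ifs <;> linarith

theorem ae_exists_tendsto_and_summable_of_condExp_le_sub_add [IsFiniteMeasure μ]
    (hV : StronglyAdapted ℱ V) (hB : StronglyAdapted ℱ B) (hc : StronglyAdapted ℱ c)
    (hVint : ∀ n, Integrable (V n) μ) (hV0 : ∀ n ω, 0 ≤ V n ω) (hB0 : ∀ n ω, 0 ≤ B n ω)
    (hc0 : ∀ n ω, 0 ≤ c n ω) (hrec : ∀ n, μ[V (n + 1) | ℱ n] ≤ᵐ[μ] V n - B n + c n)
    (hsc : ∀ᵐ ω ∂μ, Summable fun n => c n ω) :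
    ∀ᵐ ω ∂μ, (∃ l, Tendsto (fun n => V n ω) atTop (𝓝 l)) ∧ Summable fun n => B n ω := by
  have hconv : ∀ᵐ ω ∂μ, ∀ M : ℕ,
      ∃ l, Tendsto (fun n => localizedProcess V B c M n ω) atTop (𝓝 l) :=
    ae_all_iff.2 fun M =>
      (supermartingale_localizedProcess hV hB hc hVint hV0 hB0 hc0 hrec
        M.cast_nonneg).exists_ae_tendsto_of_ae_ge fun n =>
          ae_of_all _ (neg_le_localizedProcess hV0 hB0 hc0 M.cast_nonneg n)
  filter_upwards [hconv, hsc] with ω hω hcω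
  obtain ⟨M, hM⟩ := exists_nat_ge (∑' k, c k ω)
  obtain ⟨l, hl⟩ := hω M
  have hS (n : ℕ) : ∑ k ∈ range n, c k ω ≤ M :=
    (hcω.sum_le_tsum _ fun k _ => hc0 k ω).trans hM
  exact summable_and_exists_tendsto_of_tendsto_add_sum_sub (hV0 · ω) (hB0 · ω) hcω
    (hl.congr (localizedProcess_eq hc0 hS))

end Localization

section Normalization

variable {Ω : Type*} {m0 : MeasurableSpace Ω} {μ : Measure Ω} {ℱ : Filtration ℕ m0}
  {V a B c : ℕ → Ω → ℝ}

noncomputable def prodOneAdd (a : ℕ → Ω → ℝ) (n : ℕ) (ω : Ω) : ℝ :=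
  ∏ k ∈ range n, (1 + a k ω)

lemma prodOneAdd_succ (n : ℕ) (ω : Ω) :
    prodOneAdd a (n + 1) ω = prodOneAdd a n ω * (1 + a n ω) :=
  prod_range_succ _ n

lemma one_le_prodOneAdd (ha0 : ∀ n ω, 0 ≤ a n ω) (n : ℕ) (ω : Ω) : 1 ≤ prodOneAdd a n ω :=
  one_le_prod fun k _ => le_add_of_nonneg_right (ha0 k ω)

lemma prodOneAdd_pos (ha0 : ∀ n ω, 0 ≤ a n ω) (n : ℕ) (ω : Ω) : 0 < prodOneAdd a n ω :=
  zero_lt_one.trans_le (one_le_prodOneAdd ha0 n ω)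

lemma measurable_prodOneAdd (ha : StronglyAdapted ℱ a) {n m : ℕ} (hnm : n ≤ m + 1) :
    Measurable[ℱ m] (prodOneAdd a n) :=
  Finset.measurable_prod _ fun k hk => measurable_const.add
    (ha.stronglyMeasurable_le (by have := mem_range.1 hk; omega)).measurable

lemma exists_tendsto_prodOneAdd {ω : Ω} (ha : Summable fun n => a n ω) :
    ∃ l, Tendsto (fun n => prodOneAdd a n ω) atTop (𝓝 l) :=
  ⟨_, (Real.multipliable_one_add_of_summable ha).hasProd.tendsto_prod_nat⟩

theorem ae_exists_tendsto_and_summable_inv_prodOneAdd_mul [IsFiniteMeasure μ]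
    (hV : StronglyAdapted ℱ V) (ha : StronglyAdapted ℱ a) (hB : StronglyAdapted ℱ B)
    (hc : StronglyAdapted ℱ c) (hVint : ∀ n, Integrable (V n) μ) (hV0 : ∀ n ω, 0 ≤ V n ω)
    (ha0 : ∀ n ω, 0 ≤ a n ω) (hB0 : ∀ n ω, 0 ≤ B n ω) (hc0 : ∀ n ω, 0 ≤ c n ω)
    (hrec : ∀ n, μ[V (n + 1) | ℱ n] ≤ᵐ[μ] fun ω => (1 + a n ω) * V n ω - B n ω + c n ω)
    (hsc : ∀ᵐ ω ∂μ, Summable fun n => c n ω) :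
    ∀ᵐ ω ∂μ, (∃ l, Tendsto (fun n => (prodOneAdd a n ω)⁻¹ * V n ω) atTop (𝓝 l)) ∧
      Summable fun n => (prodOneAdd a (n + 1) ω)⁻¹ * B n ω := by
  have hinv0 (n : ℕ) (ω : Ω) : 0 ≤ (prodOneAdd a n ω)⁻¹ := (inv_pos.2 (prodOneAdd_pos ha0 n ω)).le
  have hinv1 (n : ℕ) (ω : Ω) : (prodOneAdd a n ω)⁻¹ ≤ 1 :=
    inv_le_one_of_one_le₀ (one_le_prodOneAdd ha0 n ω)
  have hscale {f : ℕ → Ω → ℝ} (hf : StronglyAdapted ℱ f) (k : ℕ) (hk : k ≤ 1) :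
      StronglyAdapted ℱ fun n ω => (prodOneAdd a (n + k) ω)⁻¹ * f n ω := fun n =>
    ((measurable_prodOneAdd ha (by omega)).inv.mul (hf n).measurable).stronglyMeasurable
  have hVint' (n : ℕ) : Integrable (fun ω => (prodOneAdd a n ω)⁻¹ * V n ω) μ :=
    (hVint n).bdd_mul (c := 1)
      ((measurable_prodOneAdd ha n.le_succ).inv.mono (ℱ.le n) le_rfl).aestronglyMeasurable
      (ae_of_all _ fun ω => by rw [Real.norm_eq_abs, abs_of_nonneg (hinv0 n ω)]; exact hinv1 n ω)
  refine ae_exists_tendsto_and_summable_of_condExp_le_sub_add (hscale hV 0 zero_le_one)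
    (hscale hB 1 le_rfl) (hscale hc 1 le_rfl) hVint'
    (fun n ω => mul_nonneg (hinv0 _ ω) (hV0 n ω)) (fun n ω => mul_nonneg (hinv0 _ ω) (hB0 n ω))
    (fun n ω => mul_nonneg (hinv0 _ ω) (hc0 n ω)) (fun n => ?_) ?_
  · have hw : StronglyMeasurable[ℱ n] fun ω => (prodOneAdd a (n + 1) ω)⁻¹ :=
      (measurable_prodOneAdd ha le_rfl).inv.stronglyMeasurable
    refine (condExp_mul_le_of_condExp_le hw (fun ω => hinv0 _ ω) (hVint' (n + 1)) (hVint (n + 1))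
      (hrec n)).trans (ae_of_all _ fun ω => le_of_eq ?_)
    have hne : prodOneAdd a n ω ≠ 0 := (prodOneAdd_pos ha0 n ω).ne'
    have hne' : 1 + a n ω ≠ 0 := by linarith [ha0 n ω]
    simp only [Pi.mul_apply, Pi.add_apply, Pi.sub_apply, prodOneAdd_succ]
    field_simp
  · filter_upwards [hsc] with ω hω
    exact hω.of_nonneg_of_le (fun n => mul_nonneg (hinv0 _ ω) (hc0 n ω))
      fun n => mul_le_of_le_one_left (hc0 n ω) (hinv1 _ ω)

end Normalization

/-- The Robbins–Siegmund theorem: if `E[V_{n+1}|F_n] ≤ (1 + a_n)V_n − B_n + c_n` with all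
sequences nonnegative and adapted, and `Σ a_n < ∞`, `Σ c_n < ∞` a.s., then `V_n` converges
a.s. to a finite random variable and `Σ B_n < ∞` a.s. -/
theorem stmt_19
    {Ω : Type*} [m0 : MeasurableSpace Ω] (μ : MeasureTheory.Measure Ω)
    [IsProbabilityMeasure μ] (ℱ : Filtration ℕ m0)
    (V a B c : ℕ → Ω → ℝ)
    (hVadapt : ∀ n, StronglyMeasurable[ℱ n] (V n))
    (haadapt : ∀ n, StronglyMeasurable[ℱ n] (a n))
    (hBadapt : ∀ n, StronglyMeasurable[ℱ n] (B n))
    (hcadapt : ∀ n, StronglyMeasurable[ℱ n] (c n))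
    (hVint : ∀ n, Integrable (V n) μ)
    (hV0 : ∀ n ω, 0 ≤ V n ω) (ha0 : ∀ n ω, 0 ≤ a n ω)
    (hB0 : ∀ n ω, 0 ≤ B n ω) (hc0 : ∀ n ω, 0 ≤ c n ω)
    (hrec : ∀ n, μ[V (n + 1) | ℱ n] ≤ᵐ[μ]
        fun ω => (1 + a n ω) * V n ω - B n ω + c n ω)
    (hsa : ∀ᵐ ω ∂μ, Summable (fun n => a n ω))
    (hsc : ∀ᵐ ω ∂μ, Summable (fun n => c n ω)) :
    ∀ᵐ ω ∂μ, (∃ l : ℝ, Tendsto (fun n => V n ω) atTop (nhds l)) ∧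
      Summable (fun n => B n ω) := by
  filter_upwards [ae_exists_tendsto_and_summable_inv_prodOneAdd_mul hVadapt haadapt hBadapt
    hcadapt hVint hV0 ha0 hB0 hc0 hrec hsc, hsa] with ω ⟨⟨l, hl⟩, hB⟩ haω
  have hne (n : ℕ) : prodOneAdd a n ω ≠ 0 := (prodOneAdd_pos ha0 n ω).ne'
  obtain ⟨p, hp⟩ := exists_tendsto_prodOneAdd haω
  obtain ⟨C, hC⟩ := hp.bddAbove_range
  refine ⟨⟨p * l, (hp.mul hl).congr fun n => mul_inv_cancel_left₀ (hne n) (V n ω)⟩, ?_⟩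
  refine (hB.mul_left C).of_nonneg_of_le (hB0 · ω) fun n => ?_
  calc B n ω = prodOneAdd a (n + 1) ω * ((prodOneAdd a (n + 1) ω)⁻¹ * B n ω) :=
        (mul_inv_cancel_left₀ (hne (n + 1)) (B n ω)).symm
    _ ≤ C * ((prodOneAdd a (n + 1) ω)⁻¹ * B n ω) :=
        mul_le_mul_of_nonneg_right (hC ⟨n + 1, rfl⟩)
          (mul_nonneg (inv_nonneg.2 (prodOneAdd_pos ha0 _ ω).le) (hB0 n ω))
end
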